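/- arXiv:2312.02132 — 3 statements merged into one kernel-verified Lean document; each statement's English description precedes it below -/
import Mathlib

section
/- Let q ∈ (0,1) and p ∈ [e^{-1}, 1), and let X be an exponential random variable with rate q. Then Pr[ X < ln(1/p)/(1-q) ] = 1 - p^{q/(1-q)}, and moreover 1 - p^{q/(1-q)} ≥ ln(1/p) · q. -/
open MeasureTheory ProbabilityTheory

/-- for `q ∈ (0,1)` and `p ∈ [e⁻¹, 1)`, an `Exp(q)` random variable `X`
satisfies `Pr[X < ln(1/p)/(1-q)] = 1 - p^{q/(1-q)}`, and moreover
`1 - p^{q/(1-q)} ≥ ln(1/p) · q`. -/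
theorem exp_tail_event (q p : ℝ) (hq : q ∈ Set.Ioo (0:ℝ) 1)
    (hp : p ∈ Set.Ico (Real.exp (-1)) 1) :
    expMeasure q (Set.Iio (Real.log (1 / p) / (1 - q)))
        = ENNReal.ofReal (1 - p ^ (q / (1 - q))) ∧
    1 - p ^ (q / (1 - q)) ≥ Real.log (1 / p) * q := by
  obtain ⟨hq0, hq1⟩ := hq
  obtain ⟨hp1, hp2⟩ := hp
  have hp0 : 0 < p := lt_of_lt_of_le (Real.exp_pos _) hp1
  have hq1' : 0 < 1 - q := by linarith
  set t : ℝ := Real.log (1 / p) with ht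
  have ht0 : 0 < t := Real.log_pos (by rw [lt_div_iff₀ hp0]; linarith)
  have ht1 : t ≤ 1 := by
    rw [ht, one_div, Real.log_inv]
    have := Real.log_le_log (Real.exp_pos (-1)) hp1
    rw [Real.log_exp] at this; linarith
  set x : ℝ := t / (1 - q) with hx
  have hx0 : 0 ≤ x := le_of_lt (div_pos ht0 hq1')
  have hrpow : p ^ (q / (1 - q)) = Real.exp (-(q * x)) := by
    rw [Real.rpow_def_of_pos hp0]
    congr 1
    rw [hx, ht, one_div, Real.log_inv]
    field_simp
  constructor
  · rw [expMeasure, gammaMeasure, withDensity_apply _ measurableSet_Iio,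
      setLIntegral_congr Iio_ae_eq_Iic]
    have hpdf : gammaPDF 1 q = exponentialPDF q := by
      funext y; rfl
    rw [hpdf, lintegral_exponentialPDF_eq_antiDeriv hq0, if_pos hx0, hrpow]
  · rw [hrpow]
    set s : ℝ := q * x with hs
    have hs0 : 0 ≤ s := mul_nonneg hq0.le hx0
    have hexp : 1 + s ≤ Real.exp s := by linarith [Real.add_one_le_exp s]
    have hinv : Real.exp (-s) * Real.exp s = 1 := by
      rw [← Real.exp_add]; simp
    have hsx : s * (1 - q) = t * q := by
      rw [hs, hx]; field_simp
    have hepos : (0:ℝ) < Real.exp (-s) := Real.exp_pos _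
    have h1s : (0:ℝ) < 1 + s := by linarith
    have hkey : 1 ≤ (1 - t * q) * (1 + s) := by
      nlinarith [mul_nonneg hs0 (mul_nonneg hq0.le (sub_nonneg.2 ht1))]
    have hE : Real.exp (-s) * (1 + s) ≤ (1 - t * q) * (1 + s) := by
      nlinarith [mul_le_mul_of_nonneg_left hexp hepos.le]
    have := le_of_mul_le_mul_right (by linarith : Real.exp (-s) * (1 + s) ≤ (1 - t * q) * (1 + s)) h1s
    linarith
end

section
/- (Diversity preservation of the heterogeneous aggregation, Lemma 5.) Let p^{(1)},…,p^{(n)} be probability distributions on a finite token vocabulary V and let L > 0. Consider the aggregation that generates frequencies c by coordinated sampling, samples a token j ∈ V with probability c_j/n (and ⊥ with the remaining probability 1 - Σ_j c_j/n = 0, i.e., samples a uniformly random teacher's token), outputs j if c_j ≥ 2L, and if c_j < 2L outputs either j or ⊥ according to an arbitrary (possibly randomized) rule. Then for every μ > 1: (1) for every token j ∈ V and q ∈ [0,1], if c_{j,q} ≥ 2μL then the probability that the aggregation outputs j is at least (ln(μ)/(2μ)) · (c_{j,q}/n) · q; and (2) for every token j ∈ V, the probability that the aggregation outputs j is at most (1/n)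 · Σ_{i∈[n]} p^{(i)}_j. -/
open MeasureTheory ProbabilityTheory

/-- `p` is a probability distribution (vector) on the finite token vocabulary `V`. -/
def IsProbVec {V : Type*} [Fintype V] (p : V → ℝ) : Prop :=
  (∀ j, 0 ≤ p j) ∧ ∑ j, p j = 1

/-- The measure on the shared randomness `ρ = (u_j)_{j ∈ V}`:
i.i.d. rate-1 exponential random variables, one per token. -/
noncomputable def sharedMeasure (V : Type*) [Fintype V] : Measure (V → ℝ) :=
  Measure.pi fun _ => expMeasure 1

/-- A coordinated sample: a token maximizing `p j / u j` over `j ∈ V`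
(an arbitrary maximizer in case of ties, which happen with probability zero). -/
noncomputable def coordSample {V : Type*} [Fintype V] [Nonempty V] (p : V → ℝ) (u : V → ℝ) : V :=
  (Finset.exists_max_image Finset.univ (fun j => p j / u j) Finset.univ_nonempty).choose

/-- The frequency `c_j = #{i ∈ [n] : y_i = j}` of token `j` among the coordinated
samples `y_i = coordSample (p i) u` of the `n` teachers. -/
noncomputable def freq {V : Type*} [Fintype V] [Nonempty V] [DecidableEq V] {n : ℕ}
    (p : Fin n → V → ℝ) (u : V → ℝ) (j : V) : ℕ :=
  (Finset.univ.filter fun i : Fin n => coordSample (p i) u = j).card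

/-
Write `t = u j`. A teacher `i` with `q ≤ p i j` samples `j` as soon as `t * p i k < q * u k` for
every `k ≠ j`, and conditionally on `t` this happens with probability
`exp (-(t / q) * ∑_{k ≠ j} p i k) ≥ exp (-t / q)`. Among the `m = c_{j,q}` such teachers let
`N ≤ m` be the number for which it happens; then `c_j ≥ N` and, pointwise,
`N * 1{N ≥ 2L} ≥ m (N - 2L) / (m - 2L)`. So conditionally on `t` the expected number of teachers
that sample `j` while `c_j ≥ 2L` is at least `m (m e^{-t/q} - 2L) / (m - 2L)`, which is at least
`m (μ e^{-t/q} - 1) / (μ - 1)` because `m ≥ 2μL`. Integrating against the density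
`e^{-t} ≥ e^{-t/q}` over `0 < t ≤ q log μ`, where this bound is nonnegative, gives
`m q (μ - 1) / (2μ)`, and `log μ ≤ μ - 1`; the uniformly random teacher contributes the factor
`1/n`.

For (2), an output `j` is always the proposed token, and teacher `i` samples `j` only on the race
event `p i k * u j ≤ p i j * u k` for all `k`, of probability exactly `p i j`.
-/

open Real Set
open scoped ENNReal Finset

namespace ProbabilityTheory

instance : IsProbabilityMeasure (expMeasure 1) := isProbabilityMeasure_expMeasure one_pos

instance (r : ℝ) : NullSingletonClass (expMeasure r) :=
  nullSingletonClass_withDensity _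

lemma expMeasure_one_Ioi {a : ℝ} (ha : 0 ≤ a) :
    expMeasure 1 (Ioi a) = ENNReal.ofReal (exp (-a)) := by
  rw [← compl_Iic, prob_compl_eq_one_sub measurableSet_Iic, ← ofReal_cdf,
    cdf_expMeasure_eq one_pos, if_pos ha, one_mul, ← ENNReal.ofReal_one,
    ← ENNReal.ofReal_sub _ (sub_nonneg.2 (exp_le_one_iff.2 (neg_nonpos.2 ha))), sub_sub_cancel]

lemma expMeasure_one_Ici {a : ℝ} (ha : 0 ≤ a) :
    expMeasure 1 (Ici a) = ENNReal.ofReal (exp (-a)) := by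
  rw [← measure_congr Ioi_ae_eq_Ici, expMeasure_one_Ioi ha]

lemma ae_pos_expMeasure_one : ∀ᵐ t ∂expMeasure 1, 0 < t := by
  refine ae_iff.2 ((prob_compl_eq_zero_iff measurableSet_Ioi).2 ?_)
  simp [expMeasure_one_Ioi le_rfl]

lemma setLIntegral_expMeasure_one {s : Set ℝ} (hs : MeasurableSet s) (hs0 : s ⊆ Ici 0)
    {f : ℝ → ℝ≥0∞} (hf : Measurable f) :
    ∫⁻ t in s, f t ∂expMeasure 1 = ∫⁻ t in s, ENNReal.ofReal (exp (-t)) * f t := by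
  rw [expMeasure, gammaMeasure, restrict_withDensity hs,
    lintegral_withDensity_eq_lintegral_mul _
    (by exact (measurable_gammaPDFReal 1 1).ennreal_ofReal : Measurable (gammaPDF 1 1)) hf]
  refine setLIntegral_congr_fun hs fun t ht => ?_
  simp [gammaPDF, gammaPDFReal, show (0 : ℝ) ≤ t from hs0 ht]

lemma ofReal_integral_le_setLIntegral_expMeasure_one {g : ℝ → ℝ} {q c : ℝ} (hq : 0 < q)
    (hq1 : q ≤ 1) (hg : Continuous g) (hg0 : ∀ t ∈ Ioc 0 c, 0 ≤ g t) :
    ENNReal.ofReal (∫ t in Ioc 0 c, exp (-(t / q)) * g t) ≤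
      ∫⁻ t in Ioc 0 c, ENNReal.ofReal (g t) ∂expMeasure 1 := by
  have hint : IntegrableOn (fun t => exp (-t) * g t) (Ioc 0 c) :=
    (by fun_prop : Continuous fun t => exp (-t) * g t).integrableOn_Icc.mono_set
      Ioc_subset_Icc_self
  have hmono : ∫ t in Ioc 0 c, exp (-(t / q)) * g t ≤ ∫ t in Ioc 0 c, exp (-t) * g t := by
    refine setIntegral_mono_on ((by fun_prop : Continuous fun t => exp (-(t / q)) * g t
      ).integrableOn_Icc.mono_set Ioc_subset_Icc_self) hint measurableSet_Ioc fun t ht => ?_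
    refine mul_le_mul_of_nonneg_right (exp_le_exp.2 (neg_le_neg ?_)) (hg0 t ht)
    exact le_div_self ht.1.le hq hq1
  rw [setLIntegral_expMeasure_one measurableSet_Ioc (Ioc_subset_Icc_self.trans Icc_subset_Ici_self)
    hg.measurable.ennreal_ofReal]
  simp_rw [← ENNReal.ofReal_mul (exp_pos _).le]
  rw [← ofReal_integral_eq_lintegral_ofReal hint
    ((ae_restrict_iff' measurableSet_Ioc).2 (.of_forall fun t ht =>
      mul_nonneg (exp_pos _).le (hg0 t ht)))]
  exact ENNReal.ofReal_le_ofReal hmono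

end ProbabilityTheory

lemma sub_one_div_sub_one_le {μ a m z : ℝ} (hμ : 1 < μ) (ha : 0 < a) (hm : μ * a ≤ m)
    (hz : z ≤ 1) : (μ * z - 1) / (μ - 1) ≤ (m * z - a) / (m - a) := by
  have hma : 0 < m - a := by nlinarith
  rw [div_le_div_iff₀ (by linarith) hma]
  nlinarith [mul_nonneg (sub_nonneg.2 hz) (sub_nonneg.2 hm)]

lemma integral_exp_neg_div_mul_sub_one {q μ : ℝ} (hq : 0 < q) (hμ : 0 < μ) :
    ∫ t in 0..q * log μ, exp (-(t / q)) * (μ * exp (-(t / q)) - 1) = q * (μ - 1) ^ 2 / (2 * μ) := by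
  have he : ∀ t, HasDerivAt (fun t => exp (-(t / q))) (exp (-(t / q)) * -(1 / q)) t :=
    fun t => (((hasDerivAt_id' t).div_const q).fun_neg).exp
  have hderiv : ∀ t, HasDerivAt (fun t => q * (exp (-(t / q)) - μ / 2 * exp (-(t / q)) ^ 2))
      (exp (-(t / q)) * (μ * exp (-(t / q)) - 1)) t := fun t =>
    (((he t).sub (((he t).pow 2).const_mul (μ / 2))).const_mul q).congr_deriv (by field_simp; ring)
  rw [intervalIntegral.integral_eq_sub_of_hasDerivAt (fun t _ => hderiv t)
    ((by fun_prop : Continuous _).intervalIntegrable _ _)]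
  simp only [mul_div_cancel_left₀ _ hq.ne', zero_div, neg_zero, exp_zero, exp_neg, exp_log hμ]
  field_simp
  ring

lemma le_sum_measureReal_inter_frequent {β ι : Type*} [MeasurableSpace β] (P : Measure β)
    [IsProbabilityMeasure P] (S : Finset ι) {E : ι → Set β} (hE : ∀ i ∈ S, MeasurableSet (E i))
    {a : ℝ} (ha : 0 ≤ a) (haS : a < #S) :
    #S * (∑ i ∈ S, P.real (E i) - a) / (#S - a) ≤
      ∑ i ∈ S, P.real (E i ∩ {w | a ≤ ∑ i ∈ S, (E i).indicator 1 w}) := by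
  set N : β → ℝ := fun w => ∑ i ∈ S, (E i).indicator 1 w
  set F := {w | a ≤ N w}
  have hint : ∀ i ∈ S, Integrable ((E i).indicator (1 : β → ℝ)) P :=
    fun i hi => (integrable_const 1).indicator (hE i hi)
  have hF : MeasurableSet F := measurableSet_le measurable_const <|
    Finset.measurable_sum _ fun i hi => measurable_const.indicator (hE i hi)
  have hN : ∀ w, N w ≤ #S := fun w => by
    simpa using Finset.sum_le_sum fun i (_ : i ∈ S) =>
      show (E i).indicator (1 : β → ℝ) w ≤ 1 by by_cases h : w ∈ E i <;> simp [h]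
  have hpoint : ∀ w, #S * (N w - a) / (#S - a) ≤ F.indicator N w := fun w => by
    have hSa : (0 : ℝ) < #S - a := sub_pos.2 haS
    by_cases hw : w ∈ F
    · rw [indicator_of_mem hw, div_le_iff₀ hSa]
      nlinarith [hN w, show a ≤ N w from hw]
    · rw [indicator_of_notMem hw]
      exact div_nonpos_of_nonpos_of_nonneg
        (mul_nonpos_of_nonneg_of_nonpos (by positivity) (sub_nonpos.2 (not_le.1 hw).le)) hSa.le
  calc #S * (∑ i ∈ S, P.real (E i) - a) / (#S - a)
      = ∫ w, #S * (N w - a) / (#S - a) ∂P := by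
        rw [integral_div, integral_const_mul, integral_sub (integrable_finsetSum _ hint)
          (integrable_const a), integral_finsetSum _ hint, integral_const,
          Finset.sum_congr rfl fun i hi => integral_indicator_one (hE i hi)]
        simp
    _ ≤ ∫ w, F.indicator N w ∂P := by
        refine integral_mono ((((integrable_finsetSum _ hint).sub (integrable_const a)).const_mul
          _).div_const _) ((integrable_finsetSum _ hint).indicator hF) hpoint
    _ = ∑ i ∈ S, P.real (E i ∩ F) := by
        rw [Finset.sum_congr rfl fun i hi => (integral_indicator_one ((hE i hi).inter hF)).symm,
          ← integral_finsetSum _ fun i hi => (integrable_const 1).indicator ((hE i hi).inter hF)]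
        congr 1
        ext w
        by_cases hw : w ∈ F
        · simp only [indicator_of_mem hw, N, ← Set.indicator_indicator, inter_comm (E _)]
        · simp [indicator_of_notMem hw, ← Set.indicator_indicator, inter_comm (E _)]

lemma measure_prod_uniform_biUnion {α ι Ω : Type*} [MeasurableSpace α] [MeasurableSpace Ω]
    [Fintype ι] [Nonempty ι] [MeasurableSpace ι] [MeasurableSingletonClass ι]
    (ρ : Measure α) [SFinite ρ] (ν : Measure Ω) [IsProbabilityMeasure ν] (S : Finset ι)
    {A : ι → Set α} (hA : ∀ i ∈ S, MeasurableSet (A i)) :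
    (ρ.prod ((PMF.uniformOfFintype ι).toMeasure.prod ν)) (⋃ i ∈ S, A i ×ˢ ({i} ×ˢ univ)) =
      (Fintype.card ι : ℝ≥0∞)⁻¹ * ∑ i ∈ S, ρ (A i) := by
  have hdisj : (S : Set ι).PairwiseDisjoint fun i => A i ×ˢ ({i} ×ˢ (univ : Set Ω)) :=
    fun i _ i' _ hne => Set.disjoint_left.2 fun _ ⟨_, hi, _⟩ ⟨_, hi', _⟩ => hne (hi.symm.trans hi')
  rw [measure_biUnion_finset hdisj fun i hi => (hA i hi).prod
    ((measurableSet_singleton i).prod MeasurableSet.univ), Finset.mul_sum]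
  refine Finset.sum_congr rfl fun i _ => ?_
  rw [Measure.prod_prod, Measure.prod_prod, measure_univ, mul_one,
    PMF.toMeasure_apply_singleton _ _ (measurableSet_singleton i), PMF.uniformOfFintype_apply,
    mul_comm]

section SharedRandomness

variable {ι : Type*} [Fintype ι]

instance : IsProbabilityMeasure (sharedMeasure ι) := by
  unfold sharedMeasure; infer_instance

lemma sharedMeasure_pi {s : ι → Set ℝ} {a : ι → ℝ}
    (hs : ∀ k, expMeasure 1 (s k) = ENNReal.ofReal (exp (-a k))) :
    sharedMeasure ι (univ.pi s) = ENNReal.ofReal (exp (-∑ k, a k)) := by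
  rw [sharedMeasure, Measure.pi_pi, Finset.prod_congr rfl fun k _ => hs k,
    ← ENNReal.ofReal_prod_of_nonneg fun k _ => (exp_pos _).le, ← exp_sum, Finset.sum_neg_distrib]

lemma ae_pos_sharedMeasure : ∀ᵐ u ∂sharedMeasure ι, ∀ k, 0 < u k :=
  ae_all_iff.2 fun _ => Measure.tendsto_eval_ae_ae.eventually ae_pos_expMeasure_one

lemma measurableSet_race (w : ι → ℝ) (b : ℝ) :
    MeasurableSet ({x : ℝ × (ι → ℝ) | 0 < x.1} ∩ ⋂ k, {x | w k * x.1 ≤ b * x.2 k}) :=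
  (measurableSet_lt measurable_const measurable_fst).inter <|
    MeasurableSet.iInter fun k => measurableSet_le (measurable_fst.const_mul _)
      ((measurable_pi_apply k).comp measurable_snd |>.const_mul _)

lemma expMeasure_prod_sharedMeasure_race {w : ι → ℝ} (hw : ∀ k, 0 ≤ w k) {b : ℝ} (hb : 0 < b) :
    ((expMeasure 1).prod (sharedMeasure ι))
        ({x | 0 < x.1} ∩ ⋂ k, {x | w k * x.1 ≤ b * x.2 k}) =
      ENNReal.ofReal (b / (b + ∑ k, w k)) := by
  set R : Set (ℝ × (ι → ℝ)) := {x | 0 < x.1} ∩ ⋂ k, {x | w k * x.1 ≤ b * x.2 k}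
  have hslice : ∀ t, sharedMeasure ι (Prod.mk t ⁻¹' R) =
      (Ioi 0).indicator (fun t => ENNReal.ofReal (exp (-(t * (∑ k, w k) / b)))) t := by
    intro t
    by_cases ht : 0 < t
    · have : Prod.mk t ⁻¹' R = univ.pi fun k => Ici (w k * t / b) := by
        ext x
        simp only [R, mem_preimage, mem_inter_iff, mem_ofPred_eq, mem_iInter, mem_pi, mem_univ,
          mem_Ici, true_implies, ht, true_and, div_le_iff₀ hb, mul_comm b]
      rw [this, indicator_of_mem (show t ∈ Ioi 0 from ht),
        sharedMeasure_pi fun k => expMeasure_one_Ici (by have := hw k; positivity),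
        ← Finset.sum_div, ← Finset.sum_mul, mul_comm]
    · have : Prod.mk t ⁻¹' R = ∅ := Set.eq_empty_of_forall_notMem fun x hx => ht hx.1
      rw [this, measure_empty, indicator_of_notMem (show t ∉ Ioi 0 from ht)]
  have hrate : 0 < (b + ∑ k, w k) / b := by
    have := Finset.sum_nonneg fun k (_ : k ∈ Finset.univ) => hw k
    positivity
  rw [Measure.prod_apply (measurableSet_race w b)]
  calc ∫⁻ t, sharedMeasure ι (Prod.mk t ⁻¹' R) ∂expMeasure 1
      = ∫⁻ t in Ioi 0, ENNReal.ofReal (exp (-((b + ∑ k, w k) / b) * t)) := by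
        simp_rw [hslice]
        rw [lintegral_indicator measurableSet_Ioi,
          setLIntegral_expMeasure_one measurableSet_Ioi Ioi_subset_Ici_self (by fun_prop)]
        refine setLIntegral_congr_fun measurableSet_Ioi fun t _ => ?_
        rw [← ENNReal.ofReal_mul (exp_pos _).le, ← exp_add]
        congr 2
        field_simp
        ring
    _ = ENNReal.ofReal (b / (b + ∑ k, w k)) := by
        rw [← ofReal_integral_eq_lintegral_ofReal (exp_neg_integrableOn_Ioi 0 hrate)
          (.of_forall fun _ => (exp_pos _).le), integral_exp_mul_Ioi (neg_lt_zero.2 hrate)]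
        simp

end SharedRandomness

section Tokens

variable {V : Type*} [Fintype V]

def raceSet (p : V → ℝ) (j : V) : Set (V → ℝ) := {u | 0 < u j ∧ ∀ k, p k * u j ≤ p j * u k}

lemma measurableSet_raceSet (p : V → ℝ) (j : V) : MeasurableSet (raceSet p j) := by
  have : raceSet p j = {u | 0 < u j} ∩ ⋂ k, {u | p k * u j ≤ p j * u k} := by
    ext; simp [raceSet]
  rw [this]
  exact (measurableSet_lt measurable_const (measurable_pi_apply j)).inter <|
    MeasurableSet.iInter fun k => measurableSet_le ((measurable_pi_apply j).const_mul _)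
      ((measurable_pi_apply k).const_mul _)

def splitAt (j : V) (u : V → ℝ) : ℝ × ({k // k ≠ j} → ℝ) := (u j, fun k => u k)

def marginSet (p : V → ℝ) (j : V) (q : ℝ) : Set (ℝ × ({k // k ≠ j} → ℝ)) :=
  {x | ∀ k : {k // k ≠ j}, x.1 * p k < q * x.2 k}

lemma measurableSet_marginSet (p : V → ℝ) (j : V) (q : ℝ) : MeasurableSet (marginSet p j q) := by
  have : marginSet p j q = ⋂ k : {k // k ≠ j}, {x | x.1 * p k < q * x.2 k} := by
    ext; simp [marginSet]
  rw [this]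
  exact MeasurableSet.iInter fun k => measurableSet_lt (measurable_fst.mul_const _)
    (((measurable_pi_apply k).comp measurable_snd).const_mul _)

variable {n : ℕ}

noncomputable def marginCount (p : Fin n → V → ℝ) (j : V) (q : ℝ)
    (x : ℝ × ({k // k ≠ j} → ℝ)) : ℝ :=
  ∑ i with q ≤ p i j, (marginSet (p i) j q).indicator 1 x

lemma measurable_marginCount (p : Fin n → V → ℝ) (j : V) (q : ℝ) :
    Measurable (marginCount p j q) :=
  Finset.measurable_sum _ fun _ _ => measurable_const.indicator (measurableSet_marginSet _ _ _)

def goodSet (p : Fin n → V → ℝ) (j : V) (q L : ℝ) (i : Fin n) :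
    Set (ℝ × ({k // k ≠ j} → ℝ)) :=
  {x | 0 < x.1 ∧ x ∈ marginSet (p i) j q ∧ 2 * L ≤ marginCount p j q x}

lemma measurableSet_goodSet (p : Fin n → V → ℝ) (j : V) (q L : ℝ) (i : Fin n) :
    MeasurableSet (goodSet p j q L i) :=
  (measurableSet_lt measurable_const measurable_fst).inter <|
    (measurableSet_marginSet _ _ _).inter <|
      measurableSet_le measurable_const (measurable_marginCount p j q)

section CoordSample

variable [Nonempty V]

lemma div_le_div_coordSample (p u : V → ℝ) (k : V) :
    p k / u k ≤ p (coordSample p u) / u (coordSample p u) :=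
  (Finset.exists_max_image Finset.univ (fun j => p j / u j)
    Finset.univ_nonempty).choose_spec.2 k (Finset.mem_univ k)

lemma mem_raceSet_of_coordSample_eq {p u : V → ℝ} (hu : ∀ k, 0 < u k) :
    u ∈ raceSet p (coordSample p u) := by
  refine ⟨hu _, fun k => ?_⟩
  have := div_le_div_coordSample p u k
  rw [div_le_div_iff₀ (hu k) (hu _)] at this
  linarith

lemma coordSample_eq_of_mem_marginSet {p u : V → ℝ} {j : V} {q : ℝ} (hp : ∀ k, 0 ≤ p k)
    (hq : 0 < q) (hqj : q ≤ p j) (huj : 0 < u j) (h : splitAt j u ∈ marginSet p j q) :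
    coordSample p u = j := by
  by_contra hne
  set y := coordSample p u
  have hy : u j * p y < q * u y := h ⟨y, hne⟩
  have huy : 0 < u y := pos_of_mul_pos_right ((mul_nonneg huj.le (hp y)).trans_lt hy) hq.le
  have : p y / u y < p j / u j := calc
    p y / u y < q / u j := by rw [div_lt_div_iff₀ huy huj]; linarith
    _ ≤ p j / u j := by gcongr
  exact this.not_ge (div_le_div_coordSample p u j)

end CoordSample

variable [DecidableEq V]

lemma measurePreserving_splitAt (j : V) :
    MeasurePreserving (splitAt j) (sharedMeasure V)
      ((expMeasure 1).prod (sharedMeasure {k // k ≠ j})) := by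
  have hsplit : MeasurePreserving (MeasurableEquiv.piEquivPiSubtypeProd (fun _ : V => ℝ) (· = j))
      (sharedMeasure V)
      ((Measure.pi fun _ : {k // k = j} => expMeasure 1).prod (sharedMeasure {k // k ≠ j})) := by
    convert measurePreserving_piEquivPiSubtypeProd (fun _ : V => expMeasure 1) (· = j) using 3
    all_goals rfl
  exact ((measurePreserving_funUnique (expMeasure 1) {k // k = j}).prod
    (MeasurePreserving.id _)).comp hsplit

lemma sharedMeasure_raceSet {p : V → ℝ} (hp : IsProbVec p) (j : V) :
    sharedMeasure V (raceSet p j) = ENNReal.ofReal (p j) := by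
  have hpre : raceSet p j =
      splitAt j ⁻¹' ({x | 0 < x.1} ∩ ⋂ k : {k // k ≠ j}, {x | p k * x.1 ≤ p j * x.2 k}) := by
    ext u
    simp only [raceSet, mem_ofPred_eq, mem_preimage, mem_inter_iff, mem_iInter, splitAt]
    refine ⟨fun ⟨h0, h⟩ => ⟨h0, fun k => h k⟩, fun ⟨h0, h⟩ => ⟨h0, fun k => ?_⟩⟩
    by_cases hk : k = j
    · exact hk ▸ le_rfl
    · exact h ⟨k, hk⟩
  rcases (hp.1 j).eq_or_lt with hpj | hpj
  · obtain ⟨k, -, hk⟩ := Finset.exists_lt_of_sum_lt (s := Finset.univ) (f := fun _ => 0) (g := p)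
      (by simp [hp.2])
    have : raceSet p j = ∅ := Set.eq_empty_of_forall_notMem fun u ⟨h0, h⟩ => by
      have := h k
      rw [← hpj, zero_mul] at this
      exact (mul_pos hk h0).not_ge this
    rw [this, measure_empty, ← hpj, ENNReal.ofReal_zero]
  rw [hpre, (measurePreserving_splitAt j).measure_preimage
      (measurableSet_race _ _).nullMeasurableSet,
    expMeasure_prod_sharedMeasure_race (w := fun k : {k // k ≠ j} => p k) (fun k => hp.1 k) hpj,
    ← Fintype.sum_eq_add_sum_subtype_ne, hp.2, div_one]

lemma exp_neg_div_le_measureReal_marginSet {p : V → ℝ} (hp : IsProbVec p) (j : V) {q t : ℝ}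
    (hq : 0 < q) (ht : 0 ≤ t) :
    exp (-(t / q)) ≤ (sharedMeasure _).real (Prod.mk t ⁻¹' marginSet p j q) := by
  have hslice :
      Prod.mk t ⁻¹' marginSet p j q = univ.pi fun k : {k // k ≠ j} => Ioi (t * p k / q) := by
    ext w
    simp only [marginSet, mem_preimage, mem_ofPred_eq, mem_pi, mem_univ, true_implies, mem_Ioi,
      div_lt_iff₀ hq, mul_comm q]
  have hsum : ∑ k : {k // k ≠ j}, p k ≤ 1 := by
    rw [← hp.2, Fintype.sum_eq_add_sum_subtype_ne _ j]
    linarith [hp.1 j]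
  rw [measureReal_def, hslice, sharedMeasure_pi fun k => expMeasure_one_Ioi
    (by have := hp.1 k; positivity), ENNReal.toReal_ofReal (exp_pos _).le, exp_le_exp,
    neg_le_neg_iff, ← Finset.sum_div, ← Finset.mul_sum]
  exact div_le_div_of_nonneg_right (mul_le_of_le_one_right ht hsum) hq.le

lemma le_sum_sharedMeasure_goodSet {p : Fin n → V → ℝ} (hp : ∀ i, IsProbVec (p i)) (j : V)
    {q L μ t : ℝ} (hq : 0 < q) (hL : 0 < L) (hμ : 1 < μ)
    (hS : 2 * μ * L ≤ #{i | q ≤ p i j}) (ht : 0 < t) :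
    ENNReal.ofReal (#{i | q ≤ p i j} * (μ * exp (-(t / q)) - 1) / (μ - 1)) ≤
      ∑ i with q ≤ p i j, sharedMeasure _ (Prod.mk t ⁻¹' goodSet p j q L i) := by
  set S := Finset.univ.filter fun i => q ≤ p i j
  set E := fun i => Prod.mk t ⁻¹' marginSet (p i) j q
  set P := sharedMeasure {k // k ≠ j}
  have hE : ∀ i ∈ S, MeasurableSet (E i) :=
    fun i _ => (measurableSet_marginSet _ _ _).preimage measurable_prodMk_left
  have hslice : ∀ i, Prod.mk t ⁻¹' goodSet p j q L i =
      E i ∩ {w | 2 * L ≤ ∑ i ∈ S, (E i).indicator 1 w} := fun i => by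
    ext w
    simp only [goodSet, marginCount, mem_preimage, mem_ofPred_eq, mem_inter_iff, ht, true_and]
    rfl
  have hz : #S * exp (-(t / q)) ≤ ∑ i ∈ S, P.real (E i) := by
    simpa using Finset.sum_le_sum fun i (_ : i ∈ S) =>
      exp_neg_div_le_measureReal_marginSet (hp i) j hq ht.le
  have hSL : 0 < (#S : ℝ) - 2 * L := by nlinarith
  rw [Finset.sum_congr rfl fun i _ => congrArg P (hslice i),
    ← Finset.sum_congr rfl fun i _ => ofReal_measureReal, ← ENNReal.ofReal_sum_of_nonneg
    fun _ _ => measureReal_nonneg]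
  refine ENNReal.ofReal_le_ofReal <| le_trans ?_ <|
    le_sum_measureReal_inter_frequent P S hE (by positivity) (by linarith)
  rw [mul_div_assoc, mul_div_assoc]
  refine mul_le_mul_of_nonneg_left ?_ (Nat.cast_nonneg _)
  calc (μ * exp (-(t / q)) - 1) / (μ - 1) ≤ (#S * exp (-(t / q)) - 2 * L) / (#S - 2 * L) :=
        sub_one_div_sub_one_le hμ (by positivity) (by linarith)
          (exp_le_one_iff.2 (neg_nonpos.2 (by positivity)))
    _ ≤ _ := div_le_div_of_nonneg_right (by linarith) hSL.le

lemma ofReal_le_sum_measure_goodSet {p : Fin n → V → ℝ} (hp : ∀ i, IsProbVec (p i)) (j : V)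
    {q L μ : ℝ} (hq : 0 < q) (hq1 : q ≤ 1) (hL : 0 < L) (hμ : 1 < μ)
    (hS : 2 * μ * L ≤ #{i | q ≤ p i j}) :
    ENNReal.ofReal (#{i | q ≤ p i j} * q * (μ - 1) / (2 * μ)) ≤
      ∑ i with q ≤ p i j, ((expMeasure 1).prod (sharedMeasure _)) (goodSet p j q L i) := by
  set m : ℝ := (#{i | q ≤ p i j} : ℝ)
  set g : ℝ → ℝ := fun t => m * (μ * exp (-(t / q)) - 1) / (μ - 1)
  have hμ0 : 0 < μ := by linarith
  have hg0 : ∀ t ∈ Ioc 0 (q * log μ), 0 ≤ g t := fun t ht => by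
    have : μ⁻¹ ≤ exp (-(t / q)) := by
      rw [← exp_log (inv_pos.2 hμ0), log_inv, exp_le_exp, neg_le_neg_iff, div_le_iff₀ hq, mul_comm]
      exact ht.2
    have : 1 ≤ μ * exp (-(t / q)) := by rwa [← inv_mul_le_iff₀ hμ0, mul_one]
    exact div_nonneg (mul_nonneg (Nat.cast_nonneg _) (by linarith)) (by linarith)
  have heval : ∫ t in Ioc 0 (q * log μ), exp (-(t / q)) * g t = m * q * (μ - 1) / (2 * μ) := by
    have : ∀ t, exp (-(t / q)) * g t =
        m / (μ - 1) * (exp (-(t / q)) * (μ * exp (-(t / q)) - 1)) := fun t => by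
      simp only [g]; ring
    simp_rw [this]
    rw [← intervalIntegral.integral_of_le (mul_nonneg hq.le (log_nonneg hμ.le)),
      intervalIntegral.integral_const_mul, integral_exp_neg_div_mul_sub_one hq hμ0]
    field_simp [(sub_pos.2 hμ).ne']
  calc ENNReal.ofReal (m * q * (μ - 1) / (2 * μ))
      ≤ ∫⁻ t in Ioc 0 (q * log μ), ENNReal.ofReal (g t) ∂expMeasure 1 :=
        heval ▸ ofReal_integral_le_setLIntegral_expMeasure_one hq hq1 (by fun_prop) hg0
    _ ≤ ∫⁻ t in Ioc 0 (q * log μ), ∑ i with q ≤ p i j,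
          sharedMeasure _ (Prod.mk t ⁻¹' goodSet p j q L i) ∂expMeasure 1 :=
        setLIntegral_mono' measurableSet_Ioc fun t ht =>
          le_sum_sharedMeasure_goodSet hp j hq hL hμ hS ht.1
    _ ≤ ∫⁻ t, ∑ i with q ≤ p i j, sharedMeasure _ (Prod.mk t ⁻¹' goodSet p j q L i)
          ∂expMeasure 1 := setLIntegral_le_lintegral _ _
    _ = _ := by
        rw [lintegral_finsetSum _ fun i _ =>
          measurable_measure_prodMk_left (measurableSet_goodSet p j q L i)]
        exact Finset.sum_congr rfl fun i _ =>
          (Measure.prod_apply (measurableSet_goodSet p j q L i)).symm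

variable [Nonempty V]

lemma marginCount_le_freq {p : Fin n → V → ℝ} (hp : ∀ i, IsProbVec (p i)) {j : V} {q : ℝ}
    (hq : 0 < q) {u : V → ℝ} (huj : 0 < u j) : marginCount p j q (splitAt j u) ≤ freq p u j := by
  calc marginCount p j q (splitAt j u)
      ≤ ∑ i with q ≤ p i j, if coordSample (p i) u = j then (1 : ℝ) else 0 :=
        Finset.sum_le_sum fun i hi => by
          by_cases hm : splitAt j u ∈ marginSet (p i) j q
          · simp [indicator_of_mem hm,
              coordSample_eq_of_mem_marginSet (hp i).1 hq (Finset.mem_filter.1 hi).2 huj hm]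
          · rw [indicator_of_notMem hm]
            split_ifs <;> norm_num
    _ ≤ ∑ i, if coordSample (p i) u = j then (1 : ℝ) else 0 :=
        Finset.sum_le_sum_of_subset_of_nonneg (Finset.filter_subset _ _)
          fun _ _ _ => by split_ifs <;> norm_num
    _ = freq p u j := by rw [Finset.sum_boole]; rfl

variable {Ω : Type*}

noncomputable def aggregate (p : Fin n → V → ℝ) (L : ℝ) (rule : (V → ℕ) → V → Ω → Option V)
    (x : (V → ℝ) × Fin n × Ω) : Option V :=
  if 2 * L ≤ ((freq p x.1 (coordSample (p x.2.1) x.1) : ℝ)) then some (coordSample (p x.2.1) x.1)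
  else rule (freq p x.1) (coordSample (p x.2.1) x.1) x.2.2

lemma coordSample_eq_of_aggregate_eq_some {p : Fin n → V → ℝ} {L : ℝ}
    {rule : (V → ℕ) → V → Ω → Option V} (hrule : ∀ c j ω, rule c j ω = some j ∨ rule c j ω = none)
    {x : (V → ℝ) × Fin n × Ω} {j : V} (h : aggregate p L rule x = some j) :
    coordSample (p x.2.1) x.1 = j := by
  unfold aggregate at h
  split_ifs at h
  · exact Option.some_injective _ h
  · rcases hrule (freq p x.1) (coordSample (p x.2.1) x.1) x.2.2 with h' | h' <;> rw [h'] at h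
    · exact Option.some_injective _ h
    · cases h

lemma aggregate_eq_some {p : Fin n → V → ℝ} {L : ℝ} {rule : (V → ℕ) → V → Ω → Option V}
    {x : (V → ℝ) × Fin n × Ω} {j : V} (hj : coordSample (p x.2.1) x.1 = j)
    (hL : 2 * L ≤ (freq p x.1 j : ℝ)) : aggregate p L rule x = some j := by
  rw [aggregate, hj, if_pos hL]

variable [MeasurableSpace Ω] [Nonempty (Fin n)]

theorem measure_aggregate_eq_some_le (p : Fin n → V → ℝ) (hp : ∀ i, IsProbVec (p i)) (L : ℝ)
    (ν : Measure Ω) [IsProbabilityMeasure ν] {rule : (V → ℕ) → V → Ω → Option V}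
    (hrule : ∀ c j ω, rule c j ω = some j ∨ rule c j ω = none) (j : V) :
    ((sharedMeasure V).prod ((PMF.uniformOfFintype (Fin n)).toMeasure.prod ν))
        {x | aggregate p L rule x = some j} ≤ ENNReal.ofReal (1 / n * ∑ i, p i j) := by
  have hsub : {x | aggregate p L rule x = some j}
      ≤ᵐ[(sharedMeasure V).prod ((PMF.uniformOfFintype (Fin n)).toMeasure.prod ν)]
      ⋃ i ∈ Finset.univ, raceSet (p i) j ×ˢ ({i} ×ˢ univ) := by
    filter_upwards [Measure.quasiMeasurePreserving_fst.ae ae_pos_sharedMeasure]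
      with x hx (hxj : aggregate p L rule x = some j)
    refine mem_biUnion (Finset.mem_coe.2 (Finset.mem_univ x.2.1)) ⟨?_, rfl, trivial⟩
    rw [← coordSample_eq_of_aggregate_eq_some hrule hxj]
    exact mem_raceSet_of_coordSample_eq hx
  have hn : (0 : ℝ) < n := Nat.cast_pos.2 (Fin.pos_iff_nonempty.2 ‹_›)
  calc _ ≤ _ := measure_mono_ae hsub
    _ = (n : ℝ≥0∞)⁻¹ * ∑ i, ENNReal.ofReal (p i j) := by
      rw [measure_prod_uniform_biUnion _ _ _ fun i _ => measurableSet_raceSet (p i) j,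
        Fintype.card_fin]
      simp_rw [sharedMeasure_raceSet (hp _)]
    _ = ENNReal.ofReal (1 / n * ∑ i, p i j) := by
      rw [ENNReal.ofReal_mul (by positivity), ENNReal.ofReal_sum_of_nonneg fun i _ => (hp i).1 j,
        one_div, ENNReal.ofReal_inv_of_pos hn, ENNReal.ofReal_natCast]

theorem le_measure_aggregate_eq_some {p : Fin n → V → ℝ} (hp : ∀ i, IsProbVec (p i)) {L : ℝ}
    (hL : 0 < L) (ν : Measure Ω) [IsProbabilityMeasure ν] (rule : (V → ℕ) → V → Ω → Option V)
    {μ : ℝ} (hμ : 1 < μ) (j : V) {q : ℝ} (hq0 : 0 ≤ q) (hq1 : q ≤ 1)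
    (hS : 2 * μ * L ≤ #{i | q ≤ p i j}) :
    ENNReal.ofReal (log μ / (2 * μ) * (#{i | q ≤ p i j} / n) * q) ≤
      ((sharedMeasure V).prod ((PMF.uniformOfFintype (Fin n)).toMeasure.prod ν))
        {x | aggregate p L rule x = some j} := by
  rcases hq0.eq_or_lt with rfl | hq
  · simp
  set S := Finset.univ.filter fun i => q ≤ p i j
  have hsub : ⋃ i ∈ S, (splitAt j ⁻¹' goodSet p j q L i) ×ˢ ({i} ×ˢ Set.univ) ⊆
      {x | aggregate p L rule x = some j} := by
    rintro ⟨u, i, ω⟩ hx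
    obtain ⟨i, hi, hu, rfl : _ = i, -⟩ := mem_iUnion₂.1 hx
    exact aggregate_eq_some (coordSample_eq_of_mem_marginSet (hp _).1 hq
      (Finset.mem_filter.1 hi).2 hu.1 hu.2.1) (hu.2.2.trans (marginCount_le_freq hp hq hu.1))
  have hn : (0 : ℝ) < n := Nat.cast_pos.2 (Fin.pos_iff_nonempty.2 ‹_›)
  calc ENNReal.ofReal (log μ / (2 * μ) * (#S / n) * q)
      ≤ (n : ℝ≥0∞)⁻¹ * ENNReal.ofReal (#S * q * (μ - 1) / (2 * μ)) := by
        rw [← ENNReal.ofReal_natCast, ← ENNReal.ofReal_inv_of_pos hn,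
          ← ENNReal.ofReal_mul (by positivity)]
        refine ENNReal.ofReal_le_ofReal ?_
        have hlog := log_le_sub_one_of_pos (by linarith : 0 < μ)
        calc log μ / (2 * μ) * (#S / n) * q = log μ * (#S * q / (2 * μ * n)) := by ring
          _ ≤ (μ - 1) * (#S * q / (2 * μ * n)) := by gcongr
          _ = _ := by ring
    _ ≤ (n : ℝ≥0∞)⁻¹ * ∑ i ∈ S, ((expMeasure 1).prod (sharedMeasure _)) (goodSet p j q L i) := by
        gcongr
        exact ofReal_le_sum_measure_goodSet hp j hq hq1 hL hμ hS
    _ = _ := by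
        rw [measure_prod_uniform_biUnion _ _ _ fun i _ =>
          (measurableSet_goodSet p j q L i).preimage (measurePreserving_splitAt j).measurable,
          Fintype.card_fin]
        simp_rw [(measurePreserving_splitAt j).measure_preimage
          (measurableSet_goodSet p j q L _).nullMeasurableSet]
    _ ≤ _ := measure_mono hsub

end Tokens

/-- Diversity preservation of the heterogeneous aggregation, Lemma 5:
the aggregation generates frequencies `c` by coordinated sampling, samples a
token `j` with probability `c_j/n` (equivalently, takes the coordinated sample
of a uniformly random teacher `i`), outputs `j` if `c_j ≥ 2L`, and otherwise
outputs either `j` or ⊥ according to an arbitrary randomized rule (randomness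
`ω ∼ ν`, independent of everything else).  Then for every `μ > 1`:
(1) if `c_{j,q} ≥ 2μL` then token `j` is output with probability at least
`(ln μ / (2μ)) · (c_{j,q}/n) · q`; and (2) every token `j` is output with
probability at most `(1/n) · ∑_i p^{(i)}_j`. -/
theorem heterogeneous_diversity_preserving {V : Type*} [Fintype V] [Nonempty V] [DecidableEq V]
    {n : ℕ} (hn : 0 < n)
    (p : Fin n → V → ℝ) (hp : ∀ i, IsProbVec (p i))
    (L : ℝ) (hL : 0 < L)
    {Ω : Type*} [MeasurableSpace Ω] (ν : Measure Ω) [IsProbabilityMeasure ν]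
    (rule : (V → ℕ) → V → Ω → Option V)
    (hrule : ∀ c j ω, rule c j ω = some j ∨ rule c j ω = none)
    (μ : ℝ) (hμ : 1 < μ) :
    (∀ (j : V) (q : ℝ), 0 ≤ q → q ≤ 1 →
      2 * μ * L ≤ ((Finset.univ.filter fun i : Fin n => q ≤ p i j).card : ℝ) →
      ((sharedMeasure V).prod
          (((@PMF.uniformOfFintype (Fin n) _ (Fin.pos_iff_nonempty.mp hn)).toMeasure).prod ν))
          {x : (V → ℝ) × (Fin n) × Ω |
            (if 2 * L ≤ ((freq p x.1 (coordSample (p x.2.1) x.1) : ℝ)) then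
                some (coordSample (p x.2.1) x.1)
              else rule (freq p x.1) (coordSample (p x.2.1) x.1) x.2.2) = some j}
        ≥ ENNReal.ofReal (Real.log μ / (2 * μ) *
            (((Finset.univ.filter fun i : Fin n => q ≤ p i j).card : ℝ) / n) * q)) ∧
    (∀ j : V,
      ((sharedMeasure V).prod
          (((@PMF.uniformOfFintype (Fin n) _ (Fin.pos_iff_nonempty.mp hn)).toMeasure).prod ν))
          {x : (V → ℝ) × (Fin n) × Ω |
            (if 2 * L ≤ ((freq p x.1 (coordSample (p x.2.1) x.1) : ℝ)) then
                some (coordSample (p x.2.1) x.1)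
              else rule (freq p x.1) (coordSample (p x.2.1) x.1) x.2.2) = some j}
        ≤ ENNReal.ofReal (1 / n * ∑ i, p i j)) := by
  have := Fin.pos_iff_nonempty.mp hn
  exact ⟨fun j q hq0 hq1 hS => le_measure_aggregate_eq_some hp hL ν rule hμ j hq0 hq1 hS,
    measure_aggregate_eq_some_le p hp L ν hrule⟩
end

section
/- (Distribution of the common-token frequency in the mixture model.) Let α ∈ (0,1), let j* be a token in a finite vocabulary V, and for each teacher i ∈ [n] let p^{(i)} = α·δ_{j*} + (1-α)·r^{(i)}, where δ_{j*} is the point mass at j* and r^{(1)},…,r^{(n)} are probability distributions on V whose supports are pairwise disjoint and do not contain j*. Then under coordinated sampling the frequency c_{j*} of token j* is distributed as the following mixture: draw Y ~ Exp(α) (exponential with rate α), and conditioned on Y, c_{j*} ~ Binomial(n, e^{-Y(1-α)}). -/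
open MeasureTheory ProbabilityTheory

/-!
Split the shared randomness as `u = (u_{j⋆}, w)`. Up to ties, which have probability zero,
teacher `i` samples `j⋆` exactly when `w_h > u_{j⋆} (1 - α) / α · r^{(i)}_h` for every `h ≠ j⋆`.
Given `u_{j⋆} = t` these events are boxes in the remaining i.i.d. `Exp(1)` coordinates; since the
supports of the `r^{(i)}` are disjoint and the exponential law is memoryless, the boxes are
independent, each of probability `e^{-t(1-α)/α}`. Hence `c_{j⋆}` is binomial given `t`, and the
substitution `t = α Y` with `Y ∼ Exp(α)` gives the mixture.
-/

open Set Real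
open scoped ENNReal Finset

section CoordSample

variable {V : Type*} [Fintype V] [Nonempty V]

theorem div_le_coordSample (p u : V → ℝ) (h : V) :
    p h / u h ≤ p (coordSample p u) / u (coordSample p u) :=
  (Finset.exists_max_image Finset.univ (fun j => p j / u j) Finset.univ_nonempty).choose_spec.2 h
    (Finset.mem_univ h)

theorem coordSample_eq_iff {p u : V → ℝ} {j : V} (hties : ∀ h ≠ j, p h / u h ≠ p j / u j) :
    coordSample p u = j ↔ ∀ h ≠ j, p h / u h < p j / u j := by
  constructor
  · rintro rfl h hh
    exact (div_le_coordSample p u h).lt_of_ne (hties h hh)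
  · intro hlt
    by_contra hne
    exact (hlt _ hne).not_ge (div_le_coordSample p u j)

theorem coordSample_mixture_eq_iff [DecidableEq V] {α : ℝ} (hα : 0 < α) {q ρ u : V → ℝ} {j : V}
    (hq : ∀ h, q h = α * (if h = j then 1 else 0) + (1 - α) * ρ h) (hρj : ρ j = 0)
    (hu : ∀ h, 0 < u h) (hties : ∀ h ≠ j, u h ≠ u j * ((1 - α) / α * ρ h)) :
    coordSample q u = j ↔ ∀ h ≠ j, u j * ((1 - α) / α * ρ h) < u h := by
  have hqj : q j = α := by simp [hq, hρj]
  have hqh : ∀ h ≠ j, q h = (1 - α) * ρ h := fun h hh => by simp [hq, hh]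
  have key : ∀ h ≠ j, (q h / u h < q j / u j ↔ u j * ((1 - α) / α * ρ h) < u h) ∧
      (q h / u h = q j / u j ↔ u h = u j * ((1 - α) / α * ρ h)) := by
    intro h hh
    have hthr : u j * ((1 - α) / α * ρ h) = (1 - α) * ρ h * u j / α := by ring
    rw [hqj, hqh h hh, div_lt_div_iff₀ (hu h) (hu j), div_eq_div_iff (hu h).ne' (hu j).ne', hthr,
      div_lt_iff₀ hα, eq_div_iff hα.ne']
    constructor <;> constructor <;> intro H <;> linarith
  rw [coordSample_eq_iff fun h hh => (not_congr (key h hh).2).2 (hties h hh)]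
  exact forall₂_congr fun h hh => (key h hh).1

end CoordSample

section CountingEvents

variable {Ω ι : Type*} [Fintype ι] {A : ι → Set Ω} [∀ i, DecidablePred (· ∈ A i)]

theorem setOf_filter_mem_eq_iInter [DecidableEq ι] (T : Finset ι) :
    {ω | ({i | ω ∈ A i} : Finset ι) = T} = ⋂ i, if i ∈ T then A i else (A i)ᶜ := by
  ext ω
  simp only [mem_ofPred_eq, Finset.ext_iff, Finset.mem_filter, Finset.mem_univ, true_and,
    mem_iInter]
  refine forall_congr' fun i => ?_
  by_cases hi : i ∈ T <;> simp [hi]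

variable [MeasurableSpace Ω] {μ : Measure Ω}

theorem measurableSet_setOf_card_filter_mem_eq (hA : ∀ i, MeasurableSet (A i)) (k : ℕ) :
    MeasurableSet {ω | #({i | ω ∈ A i} : Finset ι) = k} := by
  have : Measurable fun ω => #({i | ω ∈ A i} : Finset ι) := by
    simp_rw [Finset.card_filter]
    exact Finset.measurable_sum _ fun i _ => Measurable.ite (hA i) measurable_const measurable_const
  exact this (measurableSet_singleton k)

theorem ProbabilityTheory.iIndepSet.measure_card_filter_mem_eq (hind : iIndepSet A μ)
    (hA : ∀ i, MeasurableSet (A i)) {q : ℝ≥0∞} (hq : ∀ i, μ (A i) = q) (k : ℕ) :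
    μ {ω | #({i | ω ∈ A i} : Finset ι) = k}
      = (Fintype.card ι).choose k * q ^ k * (1 - q) ^ (Fintype.card ι - k) := by
  classical
  have := hind.isProbabilityMeasure
  have hatom : ∀ T : Finset ι, μ {ω | ({i | ω ∈ A i} : Finset ι) = T}
      = q ^ #T * (1 - q) ^ (Fintype.card ι - #T) := by
    intro T
    rw [setOf_filter_mem_eq_iInter, ((iIndepSet_iff_iIndep _ _).1 hind).meas_iInter]
    · simp_rw [apply_ite μ, prob_compl_eq_one_sub (hA _), hq, Finset.prod_ite, Finset.prod_const,
        Finset.filter_not, Finset.filter_mem_eq_of_subset (Finset.subset_univ T),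
        Finset.card_univ_sdiff]
    · intro i
      have hAi : MeasurableSet[MeasurableSpace.generateFrom {A i}] (A i) :=
        MeasurableSpace.measurableSet_generateFrom rfl
      split_ifs
      exacts [hAi, hAi.compl]
  have hunion : {ω | #({i | ω ∈ A i} : Finset ι) = k}
      = ⋃ T ∈ Finset.powersetCard k (Finset.univ : Finset ι),
          {ω | ({i | ω ∈ A i} : Finset ι) = T} := by
    ext ω
    simp [Finset.mem_powersetCard]
  have hdisj : PairwiseDisjoint (Finset.powersetCard k (Finset.univ : Finset ι) : Set (Finset ι))
      fun T => {ω | ({i | ω ∈ A i} : Finset ι) = T} :=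
    fun T _ T' _ hne => Set.disjoint_left.2 fun ω h h' => hne (h.symm.trans h')
  have hmeas : ∀ T ∈ Finset.powersetCard k (Finset.univ : Finset ι),
      MeasurableSet {ω | ({i | ω ∈ A i} : Finset ι) = T} := fun T _ => by
    rw [setOf_filter_mem_eq_iInter]
    exact MeasurableSet.iInter fun i => by split_ifs; exacts [hA i, (hA i).compl]
  rw [hunion, measure_biUnion_finset hdisj hmeas,
    Finset.sum_congr rfl fun T hT => (Finset.mem_powersetCard.1 hT).2 ▸ hatom T,
    Finset.sum_const, Finset.card_powersetCard, Finset.card_univ, nsmul_eq_mul, mul_assoc]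

end CountingEvents

section Exponential

variable {r : ℝ}

theorem expMeasure_absolutelyContinuous : expMeasure r ≪ volume :=
  withDensity_absolutelyContinuous _ _

theorem expMeasure_Iic (hr : 0 < r) {a : ℝ} (ha : 0 ≤ a) :
    expMeasure r (Iic a) = ENNReal.ofReal (1 - exp (-(r * a))) := by
  have := isProbabilityMeasure_expMeasure hr
  rw [← ofReal_cdf, cdf_expMeasure_eq hr, if_pos ha]

theorem ae_expMeasure_pos (hr : 0 < r) : ∀ᵐ x ∂expMeasure r, 0 < x := by
  have h := expMeasure_Iic hr le_rfl
  simp only [mul_zero, neg_zero, exp_zero, sub_self, ENNReal.ofReal_zero] at h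
  exact measure_mono_null (fun x (hx : ¬ 0 < x) => (not_lt.1 hx : x ∈ Iic 0)) h

theorem expMeasure_Ioi (hr : 0 < r) {a : ℝ} (ha : 0 ≤ a) :
    expMeasure r (Ioi a) = ENNReal.ofReal (exp (-(r * a))) := by
  have := isProbabilityMeasure_expMeasure hr
  have hle : exp (-(r * a)) ≤ 1 := exp_le_one_iff.2 (by nlinarith)
  rw [← compl_Iic, prob_compl_eq_one_sub measurableSet_Iic, expMeasure_Iic hr ha,
    ← ENNReal.ofReal_one, ← ENNReal.ofReal_sub _ (sub_nonneg.2 hle), sub_sub_cancel]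

theorem map_const_mul_expMeasure (hr : 0 < r) {c : ℝ} (hc : 0 < c) :
    (expMeasure r).map (c * ·) = expMeasure (r / c) := by
  have := isProbabilityMeasure_expMeasure hr
  refine Measure.ext_of_Iic _ _ fun a => ?_
  have hpre : (c * ·) ⁻¹' Iic a = Iic (a / c) := by
    ext x
    simp [le_div_iff₀' hc]
  have := isProbabilityMeasure_expMeasure (div_pos hr hc)
  rw [Measure.map_apply (measurable_const_mul c) measurableSet_Iic, hpre, ← ofReal_cdf,
    ← ofReal_cdf, cdf_expMeasure_eq hr, cdf_expMeasure_eq (div_pos hr hc)]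
  simp only [le_div_iff₀ hc, zero_mul, mul_div_assoc', div_mul_eq_mul_div]

theorem lintegral_expMeasure (f : ℝ → ℝ≥0∞) :
    ∫⁻ x, f x ∂expMeasure r = ∫⁻ x in Ioi 0, ENNReal.ofReal (r * exp (-(r * x))) * f x := by
  have hpdf : Measurable (exponentialPDF r) := (measurable_exponentialPDFReal r).ennreal_ofReal
  change ∫⁻ x, f x ∂volume.withDensity (exponentialPDF r) = _
  rw [lintegral_withDensity_eq_lintegral_mul_non_measurable _ hpdf
      (ae_of_all _ fun _ => ENNReal.ofReal_lt_top),
    ← setLIntegral_eq_of_support_subset (s := Ici 0), setLIntegral_congr Ioi_ae_eq_Ici.symm]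
  · refine setLIntegral_congr_fun measurableSet_Ioi fun x hx => ?_
    simp [exponentialPDF_of_nonneg (le_of_lt hx)]
  · intro x hx
    by_contra hneg
    exact hx (by simp [exponentialPDF_of_neg (not_le.1 hneg)])

theorem ae_prod_pi_expMeasure_pos_and_ne {κ ι : Type*} [Fintype κ] [Finite ι]
    (hr : 0 < r) (b : ι → κ → ℝ) :
    ∀ᵐ x ∂(expMeasure r).prod (Measure.pi fun _ : κ => expMeasure r),
      0 < x.1 ∧ ∀ h, 0 < x.2 h ∧ ∀ i, x.2 h ≠ x.1 * b i h := by
  have := isProbabilityMeasure_expMeasure hr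
  rw [Measure.ae_prod_iff_ae_ae (by measurability)]
  filter_upwards [ae_expMeasure_pos hr] with t ht
  have hcoord : ∀ h, ∀ᵐ y ∂expMeasure r, 0 < y ∧ ∀ i, y ≠ t * b i h := fun h =>
    (ae_expMeasure_pos hr).and (ae_all_iff.2 fun i =>
      expMeasure_absolutelyContinuous.ae_le (compl_mem_ae_iff.2 (measure_singleton _)))
  filter_upwards [Filter.eventually_all.2 fun h => Measure.tendsto_eval_ae_ae.eventually (hcoord h)]
    with w hw using ⟨ht, hw⟩

end Exponential

theorem Finset.sum_lt_iff_forall_lt_of_pairwise {ι M : Type*} [AddCommMonoid M] [PartialOrder M]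
    [IsOrderedAddMonoid M] {s : Finset ι} (hs : s.Nonempty) {f : ι → M} (hf : ∀ i ∈ s, 0 ≤ f i)
    (hd : (s : Set ι).Pairwise fun i j => f i = 0 ∨ f j = 0) {x : M} :
    ∑ i ∈ s, f i < x ↔ ∀ i ∈ s, f i < x := by
  refine ⟨fun H i hi => (Finset.single_le_sum hf hi).trans_lt H, fun H => ?_⟩
  by_cases hex : ∃ i ∈ s, f i ≠ 0
  · obtain ⟨i, hi, hfi⟩ := hex
    rw [Finset.sum_eq_single_of_mem i hi fun j hj hji => (hd hj hi hji).resolve_right hfi]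
    exact H i hi
  · push Not at hex
    obtain ⟨i, hi⟩ := hs
    rw [Finset.sum_eq_zero hex, ← hex i hi]
    exact H i hi

section ExponentialBoxes

variable {κ ι : Type*} [Fintype κ] {r : ℝ}

theorem measurableSet_setOf_forall_lt (b : κ → ℝ) :
    MeasurableSet {w : κ → ℝ | ∀ h, b h < w h} := by
  simp only [ofPred_forall]
  exact MeasurableSet.iInter fun h => measurableSet_lt measurable_const (measurable_pi_apply h)

theorem measure_pi_expMeasure_setOf_forall_lt (hr : 0 < r) {b : κ → ℝ} (hb : ∀ h, 0 ≤ b h) :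
    Measure.pi (fun _ => expMeasure r) {w : κ → ℝ | ∀ h, b h < w h}
      = ENNReal.ofReal (exp (-(r * ∑ h, b h))) := by
  have := isProbabilityMeasure_expMeasure hr
  have hbox : {w : κ → ℝ | ∀ h, b h < w h} = univ.pi fun h => Ioi (b h) := by
    ext w
    simp
  rw [hbox, Measure.pi_pi, Finset.mul_sum, ← Finset.sum_neg_distrib, exp_sum,
    ENNReal.ofReal_prod_of_nonneg fun _ _ => (exp_nonneg _)]
  exact Finset.prod_congr rfl fun h _ => expMeasure_Ioi hr (hb h)

/-- Disjoint supports make the intersection of the boxes the box of the summed thresholds,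
whose measure factorizes by memorylessness. -/
theorem iIndepSet_pi_expMeasure_setOf_forall_lt (hr : 0 < r) {a : ι → κ → ℝ}
    (ha : ∀ i h, 0 ≤ a i h) (hd : Pairwise fun i j => ∀ h, a i h = 0 ∨ a j h = 0) :
    iIndepSet (fun i => {w : κ → ℝ | ∀ h, a i h < w h}) (Measure.pi fun _ => expMeasure r) := by
  have := isProbabilityMeasure_expMeasure hr
  refine (iIndepSet_iff_meas_biInter fun i => measurableSet_setOf_forall_lt (a i)).2 fun T => ?_
  rcases T.eq_empty_or_nonempty with rfl | hT
  · simp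
  have hinter : ⋂ i ∈ T, {w : κ → ℝ | ∀ h, a i h < w h}
      = {w | ∀ h, ∑ i ∈ T, a i h < w h} := by
    ext w
    simp only [mem_iInter, mem_ofPred_eq, Finset.sum_lt_iff_forall_lt_of_pairwise hT
      (fun i _ => ha i _) ((hd.mono fun i j H => H _).set_pairwise _)]
    exact ⟨fun H h i hi => H i hi h, fun H i hi h => H h i hi⟩
  rw [hinter, measure_pi_expMeasure_setOf_forall_lt hr fun h => Finset.sum_nonneg fun i _ => ha i h,
    Finset.sum_comm, Finset.mul_sum, ← Finset.sum_neg_distrib, exp_sum,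
    ENNReal.ofReal_prod_of_nonneg fun _ _ => (exp_nonneg _)]
  exact Finset.prod_congr rfl fun i _ =>
    (measure_pi_expMeasure_setOf_forall_lt hr (ha i)).symm

open Classical in
theorem measure_pi_expMeasure_card_filter_forall_lt [Fintype ι] (hr : 0 < r) {a : ι → κ → ℝ}
    (ha : ∀ i h, 0 ≤ a i h) (hd : Pairwise fun i j => ∀ h, a i h = 0 ∨ a j h = 0) {s : ℝ}
    (hs0 : 0 ≤ s) (hs : ∀ i, ∑ h, a i h = s) (k : ℕ) :
    Measure.pi (fun _ => expMeasure r) {w : κ → ℝ | #{i | ∀ h, a i h < w h} = k}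
      = ENNReal.ofReal ((Fintype.card ι).choose k * exp (-(r * s)) ^ k
          * (1 - exp (-(r * s))) ^ (Fintype.card ι - k)) := by
  have hle : exp (-(r * s)) ≤ 1 := exp_le_one_iff.2 (neg_nonpos.2 (mul_nonneg hr.le hs0))
  have := (iIndepSet_pi_expMeasure_setOf_forall_lt hr ha hd).measure_card_filter_mem_eq
    (fun i => measurableSet_setOf_forall_lt _)
    (fun i => (hs i) ▸ measure_pi_expMeasure_setOf_forall_lt hr (ha i)) k
  rw [← ENNReal.ofReal_one, ← ENNReal.ofReal_sub _ (exp_nonneg _),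
    ← ENNReal.ofReal_pow (exp_nonneg _), ← ENNReal.ofReal_pow (sub_nonneg.2 hle),
    ← ENNReal.ofReal_natCast, ← ENNReal.ofReal_mul (by positivity),
    ← ENNReal.ofReal_mul (by positivity)] at this
  exact this

end ExponentialBoxes

section SplitAt

def MeasurableEquiv.funSplitAt {ι : Type*} [DecidableEq ι] (i : ι) (α : Type*) [MeasurableSpace α] :
    (ι → α) ≃ᵐ α × ({j // j ≠ i} → α) where
  toEquiv := Equiv.funSplitAt i α
  measurable_toFun := (measurable_pi_apply i).prodMk (measurable_pi_lambda _ fun j =>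
    measurable_pi_apply (j : ι))
  measurable_invFun := measurable_pi_lambda _ fun j => by
    by_cases hj : j = i
    · simpa [hj] using measurable_fst
    · simp only [Equiv.funSplitAt_symm_apply, dif_neg hj]
      exact (measurable_pi_apply _).comp measurable_snd

variable {ι α : Type*} [DecidableEq ι] [MeasurableSpace α]

theorem MeasurableEquiv.funSplitAt_symm_apply_self (i : ι) (x : α × ({j // j ≠ i} → α)) :
    (MeasurableEquiv.funSplitAt i α).symm x i = x.1 := by
  change (Equiv.funSplitAt i α).symm x i = x.1
  simp

theorem MeasurableEquiv.funSplitAt_symm_apply_of_ne (i : ι) (x : α × ({j // j ≠ i} → α))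
    {j : ι} (hj : j ≠ i) : (MeasurableEquiv.funSplitAt i α).symm x j = x.2 ⟨j, hj⟩ := by
  change (Equiv.funSplitAt i α).symm x j = x.2 ⟨j, hj⟩
  simp [hj]

theorem measurePreserving_funSplitAt_symm [Fintype ι] (μ : Measure α) [SigmaFinite μ] (i : ι) :
    MeasurePreserving (MeasurableEquiv.funSplitAt i α).symm
      (μ.prod (Measure.pi fun _ : {j // j ≠ i} => μ)) (Measure.pi fun _ => μ) := by
  refine ⟨(MeasurableEquiv.funSplitAt i α).symm.measurable, (Measure.pi_eq fun s hs => ?_).symm⟩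
  have hpre : (MeasurableEquiv.funSplitAt i α).symm ⁻¹' univ.pi s
      = s i ×ˢ univ.pi fun j : {j // j ≠ i} => s j := by
    ext x
    simp only [mem_preimage, mem_univ_pi, mem_prod]
    refine ⟨fun H => ⟨?_, fun j => ?_⟩, fun H j => ?_⟩
    · simpa only [MeasurableEquiv.funSplitAt_symm_apply_self] using H i
    · simpa only [MeasurableEquiv.funSplitAt_symm_apply_of_ne i x j.2] using H j
    · by_cases hj : j = i
      · subst hj
        simpa only [MeasurableEquiv.funSplitAt_symm_apply_self] using H.1
      · simpa only [MeasurableEquiv.funSplitAt_symm_apply_of_ne i x hj] using H.2 ⟨j, hj⟩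
  rw [MeasurableEquiv.map_apply, hpre, Measure.prod_prod, Measure.pi_pi,
    Fintype.prod_eq_mul_prod_subtype_ne _ i]

end SplitAt

section MixtureModel

variable {V : Type*} [Fintype V] [DecidableEq V] {n : ℕ} {jstar : V} {r : Fin n → V → ℝ}

theorem IsProbVec.sum_subtype_ne_eq_one {q : V → ℝ} (hq : IsProbVec q) {j : V} (hj : q j = 0) :
    ∑ h : {h // h ≠ j}, q h = 1 := by
  have := Fintype.sum_eq_add_sum_subtype_ne q j
  rwa [hj, zero_add, hq.2, eq_comm] at this

open Classical in
theorem measure_pi_expMeasure_card_filter_forall_mul_lt (hr : ∀ i, IsProbVec (r i))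
    (hdisj : ∀ i k : Fin n, i ≠ k → ∀ h : V, r i h = 0 ∨ r k h = 0) (hjstar : ∀ i, r i jstar = 0)
    {t c : ℝ} (ht : 0 ≤ t) (hc : 0 ≤ c) (k : ℕ) :
    Measure.pi (fun _ : {h // h ≠ jstar} => expMeasure 1)
        {w | #{i | ∀ h : {h // h ≠ jstar}, t * (c * r i h) < w h} = k}
      = ENNReal.ofReal ((n.choose k : ℝ) * exp (-(t * c)) ^ k
          * (1 - exp (-(t * c))) ^ (n - k)) := by
  have := measure_pi_expMeasure_card_filter_forall_lt
    (a := fun i (h : {h // h ≠ jstar}) => t * (c * r i h)) one_pos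
    (fun i h => mul_nonneg ht (mul_nonneg hc ((hr i).1 h)))
    (fun i j hij h => (hdisj i j hij h).imp (fun h0 => by simp [h0]) (fun h0 => by simp [h0]))
    (mul_nonneg ht hc)
    (fun i => by rw [← Finset.mul_sum, ← Finset.mul_sum,
      (hr i).sum_subtype_ne_eq_one (hjstar i), mul_one]) k
  rwa [Fintype.card_fin, one_mul] at this

variable [Nonempty V] {α : ℝ} {p : Fin n → V → ℝ}

open Classical in
theorem ae_freq_funSplitAt_symm_eq_card (hα : 0 < α) (hjstar : ∀ i, r i jstar = 0)
    (hpdef : ∀ i h, p i h = α * (if h = jstar then 1 else 0) + (1 - α) * r i h) :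
    ∀ᵐ x ∂(expMeasure 1).prod (Measure.pi fun _ : {h // h ≠ jstar} => expMeasure 1),
      freq p ((MeasurableEquiv.funSplitAt jstar ℝ).symm x) jstar
        = #{i | ∀ h : {h // h ≠ jstar}, x.1 * ((1 - α) / α * r i h) < x.2 h} := by
  filter_upwards [ae_prod_pi_expMeasure_pos_and_ne one_pos
    fun i (h : {h // h ≠ jstar}) => (1 - α) / α * r i h] with x hx
  set u := (MeasurableEquiv.funSplitAt jstar ℝ).symm x
  have hself : u jstar = x.1 := MeasurableEquiv.funSplitAt_symm_apply_self jstar x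
  have hne : ∀ h (hh : h ≠ jstar), u h = x.2 ⟨h, hh⟩ :=
    fun h hh => MeasurableEquiv.funSplitAt_symm_apply_of_ne jstar x hh
  have hu : ∀ h, 0 < u h := fun h => by
    by_cases hh : h = jstar
    · rw [hh, hself]; exact hx.1
    · rw [hne h hh]; exact (hx.2 _).1
  refine congrArg Finset.card (Finset.filter_congr fun i _ => ?_)
  rw [coordSample_mixture_eq_iff hα (hpdef i) (hjstar i) hu fun h hh => by
    rw [hself, hne h hh]; exact (hx.2 _).2 i, Subtype.forall]
  exact forall₂_congr fun h hh => by rw [hself, hne h hh]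

end MixtureModel

/-- Distribution of the common-token frequency in the mixture model:
if each teacher's distribution is `p^{(i)} = α·δ_{j⋆} + (1-α)·r^{(i)}` with the
`r^{(i)}` having pairwise disjoint supports avoiding `j⋆`, then under coordinated
sampling the frequency of `j⋆` is distributed as a mixture: draw `Y ∼ Exp(α)`
and, conditioned on `Y`, `c_{j⋆} ∼ Binomial(n, e^{-Y(1-α)})`.  Spelled out: for
every `k`, `Pr[c_{j⋆} = k] = ∫_{y>0} α e^{-αy} · C(n,k) (e^{-y(1-α)})^k
(1-e^{-y(1-α)})^{n-k} dy`. -/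
theorem freq_mixture_distribution {V : Type*} [Fintype V] [Nonempty V] [DecidableEq V]
    {n : ℕ} (α : ℝ) (hα : α ∈ Set.Ioo (0:ℝ) 1) (jstar : V)
    (r : Fin n → V → ℝ) (hr : ∀ i, IsProbVec (r i))
    (hdisj : ∀ i k : Fin n, i ≠ k → ∀ h : V, r i h = 0 ∨ r k h = 0)
    (hjstar : ∀ i, r i jstar = 0)
    (p : Fin n → V → ℝ)
    (hpdef : ∀ i h, p i h = α * (if h = jstar then 1 else 0) + (1 - α) * r i h) :
    ∀ k : ℕ,
      sharedMeasure V {u | freq p u jstar = k}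
        = ∫⁻ y in Set.Ioi (0:ℝ),
            ENNReal.ofReal (α * Real.exp (-(α * y)) *
              ((n.choose k : ℝ) * Real.exp (-(y * (1 - α))) ^ k *
                (1 - Real.exp (-(y * (1 - α)))) ^ (n - k))) := by
  classical
  intro k
  obtain ⟨hα0, hα1⟩ := hα
  have := isProbabilityMeasure_expMeasure one_pos
  set c := (1 - α) / α
  set E : Fin n → Set (ℝ × ({h // h ≠ jstar} → ℝ)) :=
    fun i => {x | ∀ h : {h // h ≠ jstar}, x.1 * (c * r i h) < x.2 h}
  have hE : ∀ i, MeasurableSet (E i) := fun i => by simp only [E]; measurability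
  calc sharedMeasure V {u | freq p u jstar = k}
      = ((expMeasure 1).prod (Measure.pi fun _ : {h // h ≠ jstar} => expMeasure 1))
          {x | #{i | x ∈ E i} = k} := by
        rw [sharedMeasure,
          ← (measurePreserving_funSplitAt_symm (expMeasure 1) jstar).measure_preimage_equiv]
        exact measure_congr ((ae_freq_funSplitAt_symm_eq_card hα0 hjstar hpdef).mono
          fun x hx => congrArg (· = k) hx)
    _ = ∫⁻ t, ENNReal.ofReal ((n.choose k : ℝ) *
          exp (-(t * c)) ^ k * (1 - exp (-(t * c))) ^ (n - k)) ∂expMeasure 1 := by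
        rw [Measure.prod_apply (measurableSet_setOf_card_filter_mem_eq hE k)]
        exact lintegral_congr_ae ((ae_expMeasure_pos one_pos).mono fun t ht =>
          measure_pi_expMeasure_card_filter_forall_mul_lt hr hdisj hjstar ht.le
            (div_nonneg (by linarith) hα0.le) k)
    _ = _ := by
        have hscale : expMeasure 1 = (expMeasure α).map (α * ·) := by
          rw [map_const_mul_expMeasure hα0 hα0, div_self hα0.ne']
        rw [hscale, lintegral_map (by fun_prop) (measurable_const_mul α), lintegral_expMeasure]
        refine setLIntegral_congr_fun measurableSet_Ioi fun y _ => ?_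
        have hyc : α * y * c = y * (1 - α) := by simp only [c]; field_simp
        rw [hyc, ← ENNReal.ofReal_mul (by positivity)]
end
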